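/- Let G be a symmetric n×n integer matrix with det G ≠ 0. Then there exist a matrix M ∈ Mₙ(ℤ) with odd determinant, a natural number n₂ with 0 ≤ n₂ ≤ n, a symmetric n₂×n₂ integer matrix G₁ with odd determinant, and a symmetric (n−n₂)×(n−n₂) integer matrix G₂, such that MᵀGM is the block diagonal matrix with diagonal blocks G₁ and 2·G₂. (Equivalently: every nondegenerate integral lattice contains a sublattice of odd index isometric to L₁ ⊥ L₂(2) with L₁ of odd determinant.) -/

import Mathlib

/-!
Modulo 2, the radical of the form has a complement on which the form is nondegenerate. Lifting
a basis of `(ℤ/2)ⁿ` adapted to this splitting gives `M` of odd determinant with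
`MᵀGM = [[A, 2B], [2Bᵀ, 2D]]` and `det A` odd. The integral shear `[[1, -adj(A)·2B], [0, det A]]`,
whose determinant is a power of `det A`, clears the off-diagonal blocks and leaves
`det A · (det A · 2D - 4 Bᵀ adj(A) B)`, which is twice an integral symmetric matrix.
-/

open Matrix Module

theorem LinearMap.BilinForm.exists_basis_toMatrix_eq_fromBlocks {K V : Type*} [Field K]
    [AddCommGroup V] [Module K V] [FiniteDimensional K V] {B : LinearMap.BilinForm K V}
    (hB : B.IsSymm) {n : ℕ} (hn : finrank K V = n) :
    ∃ (r : ℕ) (b : Basis (Fin r ⊕ Fin (n - r)) K V) (A : Matrix (Fin r) (Fin r) K),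
      A.det ≠ 0 ∧ BilinForm.toMatrix b B = fromBlocks A 0 0 0 := by
  obtain ⟨W, hW⟩ := Submodule.exists_isCompl (ker B)
  have hrank : finrank K (ker B) = n - finrank K W := by
    rw [← hn, ← Submodule.finrank_add_eq_of_isCompl hW]; omega
  let bW := finBasis K W
  let bK := (finBasis K (ker B)).reindex (finCongr hrank)
  let b := (bW.prod bK).map (Submodule.prodEquivOfIsCompl W _ hW.symm)
  refine ⟨_, b, BilinForm.toMatrix bW (B.domRestrict₁₂ W W), ?_, ?_⟩
  · rw [← BilinForm.nondegenerate_iff_det_ne_zero]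
    exact (BilinForm.isSymm_iff.mp hB).nondegenerate_restrict_of_isCompl_ker hW.symm
  · have hker (x : V) (j : Fin (n - finrank K W)) : B x (bK j) = 0 := by
      rw [← hB.eq]; exact LinearMap.congr_fun (bK j).2 x
    ext (i | i) (j | j) <;> simp [b, BilinForm.toMatrix_apply, hker, domRestrict₁₂_apply]

namespace Matrix

variable {m o R : Type*}

theorem IsSymm.exists_conj_eq_fromBlocks {K : Type*} [Field K] {n : ℕ}
    {S : Matrix (Fin n) (Fin n) K} (hS : S.IsSymm) :
    ∃ (r : ℕ) (e : Fin n ≃ Fin r ⊕ Fin (n - r)) (P : Matrix (Fin n) (Fin n) K)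
      (A : Matrix (Fin r) (Fin r) K), P.det ≠ 0 ∧ A.det ≠ 0 ∧
        (Pᵀ * S * P).submatrix e.symm e.symm = Matrix.fromBlocks A 0 0 0 := by
  obtain ⟨r, b, A, hA, hb⟩ := LinearMap.BilinForm.exists_basis_toMatrix_eq_fromBlocks
    (isSymm_toBilin'_iff_isSymm.mpr hS) (finrank_fin_fun K)
  let e := (Pi.basisFun K (Fin n)).indexEquiv b
  let b' := b.reindex e.symm
  refine ⟨r, e, (Pi.basisFun K (Fin n)).toMatrix b', A, ?_, hA, ?_⟩
  · rw [← Basis.det_apply]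
    exact ((Pi.basisFun K (Fin n)).isUnit_det b').ne_zero
  · have hS' : LinearMap.BilinForm.toMatrix (Pi.basisFun K (Fin n)) S.toBilin' = S := by
      rw [LinearMap.BilinForm.toMatrix_basisFun, LinearMap.BilinForm.toMatrix'_toBilin']
    conv_lhs => rw [← hS', LinearMap.BilinForm.toMatrix_mul_basis_toMatrix]
    rw [← hb]
    ext i j
    simp [b', LinearMap.BilinForm.toMatrix_apply]

theorem IsSymm.transpose_mul_mul [Fintype m] [CommSemiring R] {A : Matrix m m R}
    (hA : A.IsSymm) (B : Matrix m o R) : (Bᵀ * A * B).IsSymm := by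
  rw [IsSymm, transpose_mul, transpose_mul, transpose_transpose, hA.eq, Matrix.mul_assoc]

theorem IsSymm.of_smul {α : Type*} [SMul R α] {k : R} (hk : IsSMulRegular α k)
    {A : Matrix m m α} (h : (k • A).IsSymm) : A.IsSymm :=
  IsSymm.ext fun i j => hk (h.apply i j)

theorem conj_mul_submatrix_equiv [Fintype m] [Fintype o] [CommSemiring R]
    (G M : Matrix m m R) (N : Matrix o o R) (e : m ≃ o) :
    (M * N.submatrix e e)ᵀ * G * (M * N.submatrix e e) =
      (Nᵀ * (Mᵀ * G * M).submatrix e.symm e.symm * N).submatrix e e := by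
  rw [← submatrix_mul_equiv _ _ _ e, ← submatrix_mul_equiv _ _ _ e, submatrix_submatrix,
    transpose_mul, transpose_submatrix]
  simp [Matrix.mul_assoc]

theorem odd_det_iff_det_map_ne_zero [Fintype m] [DecidableEq m] (A : Matrix m m ℤ) :
    Odd A.det ↔ (A.map (Int.cast : ℤ → ZMod 2)).det ≠ 0 := by
  rw [← Int.cast_det, Ne, ZMod.intCast_eq_zero_iff_even, Int.not_even_iff_odd]

theorem exists_eq_two_smul_of_map_eq_zero (A : Matrix m o ℤ)
    (hA : A.map (Int.cast : ℤ → ZMod 2) = 0) : ∃ B : Matrix m o ℤ, A = (2 : ℤ) • B := by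
  refine ⟨A.map (· / 2), ext fun i j => ?_⟩
  have hij : Even (A i j) := ZMod.intCast_eq_zero_iff_even.mp (congr_fun₂ hA i j)
  simpa using (Int.mul_ediv_cancel' (even_iff_two_dvd.mp hij)).symm

theorem IsSymm.exists_odd_det_conj_eq_fromBlocks {n : ℕ} {G : Matrix (Fin n) (Fin n) ℤ}
    (hG : G.IsSymm) :
    ∃ (r : ℕ) (e : Fin n ≃ Fin r ⊕ Fin (n - r)) (M : Matrix (Fin n) (Fin n) ℤ)
      (A : Matrix (Fin r) (Fin r) ℤ) (B : Matrix (Fin r) (Fin (n - r)) ℤ)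
      (D : Matrix (Fin (n - r)) (Fin (n - r)) ℤ), Odd M.det ∧ Odd A.det ∧
        (Mᵀ * G * M).submatrix e.symm e.symm =
          Matrix.fromBlocks A ((2 : ℤ) • B) ((2 : ℤ) • B)ᵀ ((2 : ℤ) • D) := by
  obtain ⟨r, e, P, A₀, hP, hA₀, hPA₀⟩ :=
    (hG.map (Int.cast : ℤ → ZMod 2)).exists_conj_eq_fromBlocks
  let M := P.map fun x => (x.val : ℤ)
  have hM : M.map (Int.cast : ℤ → ZMod 2) = P := by ext; simp [M]
  set H := (Mᵀ * G * M).submatrix e.symm e.symm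
  have hH : H.map (Int.cast : ℤ → ZMod 2) = Matrix.fromBlocks A₀ 0 0 0 := by
    rw [← hPA₀, ← hM]
    ext i j
    simp [H, Matrix.mul_apply]
  obtain ⟨B, hB⟩ := H.toBlocks₁₂.exists_eq_two_smul_of_map_eq_zero (congrArg toBlocks₁₂ hH)
  obtain ⟨D, hD⟩ := H.toBlocks₂₂.exists_eq_two_smul_of_map_eq_zero (congrArg toBlocks₂₂ hH)
  have hH₂₁ : H.toBlocks₂₁ = H.toBlocks₁₂ᵀ :=
    congrArg toBlocks₂₁ ((hG.transpose_mul_mul M).submatrix e.symm).symm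
  have hA : H.toBlocks₁₁.map (Int.cast : ℤ → ZMod 2) = A₀ := congrArg toBlocks₁₁ hH
  refine ⟨r, e, M, H.toBlocks₁₁, B, D, ?_, ?_, ?_⟩
  · rwa [odd_det_iff_det_map_ne_zero, hM]
  · rwa [odd_det_iff_det_map_ne_zero, hA]
  · rw [← hB, ← hD, ← hH₂₁, fromBlocks_toBlocks]

variable [CommRing R] [Fintype m] [DecidableEq m] [DecidableEq o]

/-- Taking the adjugate instead of the inverse keeps the shear integral, at the cost of scaling
the second block by `det A`. -/
def adjugateShear (A : Matrix m m R) (B : Matrix m o R) : Matrix (m ⊕ o) (m ⊕ o) R :=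
  fromBlocks 1 (-(A.adjugate * B)) 0 (A.det • 1)

variable [Fintype o]

theorem det_adjugateShear (A : Matrix m m R) (B : Matrix m o R) :
    (adjugateShear A B).det = A.det ^ Fintype.card o := by
  rw [adjugateShear, det_fromBlocks_zero₂₁, det_one, one_mul, det_smul, det_one, mul_one]

theorem adjugateShear_transpose_mul_fromBlocks_mul {A : Matrix m m R} (hA : A.IsSymm)
    (B : Matrix m o R) (D : Matrix o o R) :
    (adjugateShear A B)ᵀ * fromBlocks A B Bᵀ D * adjugateShear A B =
      fromBlocks A 0 0 (A.det • (A.det • D - Bᵀ * A.adjugate * B)) := by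
  have hadj : A.adjugateᵀ = A.adjugate := by rw [adjugate_transpose, hA.eq]
  have hBA : Bᵀ * A.adjugate * A = A.det • Bᵀ := by
    rw [Matrix.mul_assoc, adjugate_mul, Matrix.mul_smul, Matrix.mul_one]
  simp [adjugateShear, fromBlocks_transpose, fromBlocks_multiply, hadj, ← Matrix.mul_assoc,
    mul_adjugate, hBA, smul_sub, neg_add_eq_sub]

theorem IsSymm.exists_adjugateShear_conj_eq_fromBlocks_smul {k : R} (hk : IsSMulRegular R k)
    {A : Matrix m m R} {B : Matrix m o R} {D : Matrix o o R}
    (hH : (Matrix.fromBlocks A (k • B) (k • B)ᵀ (k • D)).IsSymm) :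
    ∃ C : Matrix o o R, C.IsSymm ∧
      (adjugateShear A (k • B))ᵀ * Matrix.fromBlocks A (k • B) (k • B)ᵀ (k • D) *
          adjugateShear A (k • B) = Matrix.fromBlocks A 0 0 (k • C) := by
  let C := A.det • (A.det • D - k • (Bᵀ * A.adjugate * B))
  have hsplit := adjugateShear_transpose_mul_fromBlocks_mul (isSymm_fromBlocks_iff.mp hH).1
    (k • B) (k • D)
  have hC : A.det • (A.det • k • D - (k • B)ᵀ * A.adjugate * (k • B)) = k • C := by
    simp only [C, transpose_smul, Matrix.smul_mul, Matrix.mul_smul]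
    module
  rw [hC] at hsplit
  refine ⟨C, IsSymm.of_smul hk ?_, hsplit⟩
  have hconj := hH.transpose_mul_mul (adjugateShear A (k • B))
  rw [hsplit] at hconj
  exact (isSymm_fromBlocks_iff.mp hconj).2.2.2

end Matrix

theorem exists_odd_index_sublattice_splitting
    {n : ℕ} (G : Matrix (Fin n) (Fin n) ℤ) (hG : G.IsSymm) :
    ∃ (n₂ : ℕ) (_ : n₂ ≤ n) (M : Matrix (Fin n) (Fin n) ℤ)
      (G₁ : Matrix (Fin n₂) (Fin n₂) ℤ)
      (G₂ : Matrix (Fin (n - n₂)) (Fin (n - n₂)) ℤ)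
      (e : Fin n ≃ (Fin n₂ ⊕ Fin (n - n₂))),
      Odd M.det ∧ G₁.IsSymm ∧ Odd G₁.det ∧ G₂.IsSymm ∧
        Mᵀ * G * M = (Matrix.fromBlocks G₁ 0 0 ((2 : ℤ) • G₂)).submatrix e e := by
  obtain ⟨r, e, M, A, B, D, hM, hA, hH⟩ := hG.exists_odd_det_conj_eq_fromBlocks
  have hr : r ≤ n := by
    simpa using Fintype.card_le_of_embedding (Function.Embedding.inl.trans e.symm.toEmbedding)
  have hHsymm : (Matrix.fromBlocks A ((2 : ℤ) • B) ((2 : ℤ) • B)ᵀ ((2 : ℤ) • D)).IsSymm :=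
    hH ▸ (hG.transpose_mul_mul M).submatrix e.symm
  obtain ⟨G₂, hG₂, hsplit⟩ :=
    hHsymm.exists_adjugateShear_conj_eq_fromBlocks_smul (.of_ne_zero two_ne_zero)
  let N := adjugateShear A ((2 : ℤ) • B)
  refine ⟨r, hr, M * N.submatrix e e, A, G₂, e, ?_, (isSymm_fromBlocks_iff.mp hHsymm).1, hA,
    hG₂, ?_⟩
  · rw [det_mul, det_submatrix_equiv_self, det_adjugateShear]
    exact hM.mul hA.pow
  · rw [conj_mul_submatrix_equiv, hH, hsplit]
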